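/- arXiv:1804.08223 — 6 statements merged into one kernel-verified Lean document; each statement's English description precedes it below -/
import Mathlib

section
/- Let $y_0 < y_1$ be real numbers, let $\varepsilon : \mathbb{R} \to \mathbb{R}$ be continuous on $[y_0, y_1]$, let $k_0, \alpha \in \mathbb{R}$, and let $\beta_+ > 0$ and $\beta_- \geq 0$ be real numbers. If $f : \mathbb{R} \to \mathbb{C}$ is twice continuously differentiable on $[y_0, y_1]$ and satisfies $f''(y) + (k_0^2 \varepsilon(y) - \alpha^2) f(y) = 0$ for all $y \in [y_0, y_1]$, together with the homogeneous Robin boundary conditions $f'(y_0) = -i\beta_- f(y_0)$ and $f'(y_1) = i\beta_+ f(y_1)$, then $f(y) = 0$ for all $y \in [y_0, y_1]$. -/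
/-!
For a real potential `q`, the flux `Im (f' · conj f)` of a solution of `f'' + q f = 0` is
constant: its derivative is `Im (f'' · conj f + |f'|²) = Im (-q |f|²) = 0`. The Robin conditions
evaluate it to `-β₋ |f y₀|²` at `y₀` and to `β₊ |f y₁|²` at `y₁`, so `f y₁ = 0`, hence also
`f' y₁ = 0`, and backward uniqueness for the linear equation (Grönwall) gives `f = 0`.
-/

open Set Complex ComplexConjugate

theorem Complex.im_mul_mul_conj (w z : ℂ) : (w * z * conj z).im = w.im * normSq z := by
  rw [mul_assoc, mul_conj, im_mul_ofReal]

theorem im_deriv_mul_conj_eq_of_secondOrder {a b : ℝ} {q : ℝ → ℝ} {f f' : ℝ → ℂ}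
    (hf : ∀ t ∈ Icc a b, HasDerivAt f (f' t) t)
    (hf' : ∀ t ∈ Icc a b, HasDerivAt f' (-q t • f t) t) :
    ∀ t ∈ Icc a b, (f' t * conj (f t)).im = (f' a * conj (f a)).im := by
  have hderiv : ∀ t ∈ Icc a b, HasDerivAt (fun x => (f' x * conj (f x)).im) 0 t := by
    intro t ht
    have h := imCLM.hasFDerivAt.comp_hasDerivAt t ((hf' t ht).mul (hf t ht).star)
    have h0 : imCLM (-q t • f t * star (f t) + f' t * star (f' t)) = 0 := by
      simp only [imCLM_apply, star_def, smul_mul_assoc, mul_conj, add_im, smul_im, ofReal_im,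
        smul_zero, add_zero]
    exact h.congr_deriv h0
  exact constant_of_has_deriv_right_zero (fun t ht => (hderiv t ht).continuousAt.continuousWithinAt)
    fun t ht => (hderiv t (Ico_subset_Icc_self ht)).hasDerivWithinAt

theorem lipschitzWith_snd_prodMk_smul_fst {E : Type*} [NormedAddCommGroup E] [NormedSpace ℝ E]
    {K : NNReal} {c : ℝ} (hK : 1 ≤ K) (hc : ‖c‖₊ ≤ K) :
    LipschitzWith K (fun p : E × E => (p.2, c • p.1)) :=
  (LipschitzWith.prod_snd.prodMk ((lipschitzWith_smul c).comp LipschitzWith.prod_fst)).weaken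
    (max_le hK (by simpa using hc))

theorem eqOn_zero_of_secondOrder_of_right {E : Type*} [NormedAddCommGroup E] [NormedSpace ℝ E]
    {a b : ℝ} {q : ℝ → ℝ} (hq : ContinuousOn q (Icc a b)) {f f' : ℝ → E}
    (hf : ∀ t ∈ Icc a b, HasDerivAt f (f' t) t)
    (hf' : ∀ t ∈ Icc a b, HasDerivAt f' (-q t • f t) t)
    (hfb : f b = 0) (hf'b : f' b = 0) : EqOn f 0 (Icc a b) := by
  -- `(f, f')` and `0` both solve the first-order system `p' = (p.2, -q t • p.1)`, uniformly
  -- Lipschitz in `p` since `q` is bounded on `[a, b]`.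
  obtain ⟨C, hC⟩ := isCompact_Icc.exists_bound_of_continuousOn hq
  have hlip : ∀ t ∈ Ioc a b, LipschitzOnWith (max 1 C.toNNReal)
      (fun p : E × E => (p.2, -q t • p.1)) univ := fun t ht =>
    (lipschitzWith_snd_prodMk_smul_fst (le_max_left _ _) (le_max_of_le_right (by
      simpa [← NNReal.coe_le_coe] using Or.inl (hC t (Ioc_subset_Icc_self ht))))).lipschitzOnWith
  have hsol : ∀ t ∈ Ioc a b, HasDerivWithinAt (fun x => (f x, f' x))
      (f' t, -q t • f t) (Iic t) t := fun t ht =>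
    ((hf t (Ioc_subset_Icc_self ht)).prodMk (hf' t (Ioc_subset_Icc_self ht))).hasDerivWithinAt
  have hzero : ∀ t ∈ Ioc a b, HasDerivWithinAt (fun _ => ((0 : E), (0 : E)))
      (0, -q t • 0) (Iic t) t := fun t _ => by
    rw [smul_zero]; exact hasDerivWithinAt_const _ _ _
  intro t ht
  have := ODE_solution_unique_of_mem_Icc_left hlip
    (fun x hx => ((hf x hx).continuousAt.prodMk (hf' x hx).continuousAt).continuousWithinAt)
    hsol (fun _ _ => mem_univ _) continuousOn_const hzero (fun _ _ => mem_univ _)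
    (by simp [hfb, hf'b]) ht
  exact congrArg Prod.fst this

theorem robin_bvp_unique_trivial_general
    (y0 y1 : ℝ)
    (ε : ℝ → ℝ) (hε : ContinuousOn ε (Icc y0 y1))
    (k0 α βp βm : ℝ) (hβp : 0 < βp) (hβm : 0 ≤ βm)
    (f f' f'' : ℝ → ℂ)
    (hf' : ∀ y ∈ Icc y0 y1, HasDerivAt f (f' y) y)
    (hf'' : ∀ y ∈ Icc y0 y1, HasDerivAt f' (f'' y) y)
    (hode : ∀ y ∈ Icc y0 y1, f'' y + ((k0 ^ 2 * ε y - α ^ 2 : ℝ) : ℂ) * f y = 0)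
    (hbc0 : f' y0 = -Complex.I * (βm : ℂ) * f y0)
    (hbc1 : f' y1 = Complex.I * (βp : ℂ) * f y1) :
    ∀ y ∈ Icc y0 y1, f y = 0 := by
  set q : ℝ → ℝ := fun y => k0 ^ 2 * ε y - α ^ 2
  have hf''q : ∀ y ∈ Icc y0 y1, HasDerivAt f' (-q y • f y) y := fun y hy => by
    rw [real_smul, ofReal_neg, neg_mul, ← eq_neg_of_add_eq_zero_left (hode y hy)]
    exact hf'' y hy
  intro y hy
  have hle : y0 ≤ y1 := hy.1.trans hy.2
  have hflux := im_deriv_mul_conj_eq_of_secondOrder hf' hf''q y1 (right_mem_Icc.2 hle)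
  rw [hbc1, hbc0, im_mul_mul_conj, im_mul_mul_conj] at hflux
  have hfy1 : f y1 = 0 := normSq_eq_zero.1 <| by
    simp only [mul_im, I_re, I_im, ofReal_re, ofReal_im, neg_re, neg_im] at hflux
    nlinarith [normSq_nonneg (f y0), normSq_nonneg (f y1)]
  exact eqOn_zero_of_secondOrder_of_right (by fun_prop) hf' hf''q hfy1
    (by rw [hbc1, hfy1, mul_zero]) hy

/-- Uniqueness for the homogeneous Robin boundary value problem
`f'' + (k₀²ε(y) - α²) f = 0` on `[y0,y1]` with `f'(y0) = -iβ₋ f(y0)`,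
`f'(y1) = iβ₊ f(y1)`: only the trivial solution exists. -/
theorem robin_bvp_unique_trivial
    (y0 y1 : ℝ) (h01 : y0 < y1)
    (ε : ℝ → ℝ) (hε : ContinuousOn ε (Icc y0 y1))
    (k0 α βp βm : ℝ) (hβp : 0 < βp) (hβm : 0 ≤ βm)
    (f f' f'' : ℝ → ℂ)
    (hf' : ∀ y ∈ Icc y0 y1, HasDerivAt f (f' y) y)
    (hf'' : ∀ y ∈ Icc y0 y1, HasDerivAt f' (f'' y) y)
    (hf''c : ContinuousOn f'' (Icc y0 y1))
    (hode : ∀ y ∈ Icc y0 y1, f'' y + ((k0 ^ 2 * ε y - α ^ 2 : ℝ) : ℂ) * f y = 0)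
    (hbc0 : f' y0 = -Complex.I * (βm : ℂ) * f y0)
    (hbc1 : f' y1 = Complex.I * (βp : ℂ) * f y1) :
    ∀ y ∈ Icc y0 y1, f y = 0 :=
  robin_bvp_unique_trivial_general y0 y1 ε hε k0 α βp βm hβp hβm f f' f'' hf' hf'' hode hbc0 hbc1
end

section
/- Let $y_0 < y_1$ be real numbers, let $\varepsilon : \mathbb{R} \to \mathbb{R}$ be continuous on $[y_0, y_1]$, let $k_0, \alpha \in \mathbb{R}$, and let $\beta_+ > 0$ and $\beta_- \geq 0$ be real numbers. If $f : \mathbb{R} \to \mathbb{C}$ is twice continuously differentiable on $[y_0, y_1]$, satisfies $f''(y) + (k_0^2 \varepsilon(y) - \alpha^2) f(y) = 0$ for all $y \in [y_0, y_1]$, and satisfies $f'(y_0) = -i\beta_- f(y_0)$ and $f'(y_1) = i\beta_+ f(y_1)$, then $\beta_+ |f(y_1)|^2 + \beta_- |f(y_0)|^2 = 0$; in particular $f(y_1) = 0$ and $f'(y_1) = 0$. -/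
open Set Complex ComplexConjugate

/-! For a real potential `q`, the current `Im (conj f · f')` of a solution of `f'' + q f = 0`
has derivative `Im (|f'|² + conj f · f'') = Im (-q |f|²) = 0`, so it takes the same value at both
ends of the interval. The Robin conditions evaluate it to `-β₋|f(y₀)|²` and `β₊|f(y₁)|²`, and two
nonnegative numbers summing to zero both vanish. -/

theorem hasDerivAt_im_conj_mul {f g : ℝ → ℂ} {f' g' : ℂ} {y : ℝ}
    (hf : HasDerivAt f f' y) (hg : HasDerivAt g g' y) :
    HasDerivAt (fun t => (conj (f t) * g t).im) (conj f' * g y + conj (f y) * g').im y :=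
  imCLM.hasFDerivAt.comp_hasDerivAt y (hf.star.mul hg)

theorem im_conj_mul_deriv_eq_of_ode {a b : ℝ} (hab : a ≤ b) {q : ℝ → ℝ} {f f' f'' : ℝ → ℂ}
    (hf' : ∀ y ∈ Icc a b, HasDerivAt f (f' y) y)
    (hf'' : ∀ y ∈ Icc a b, HasDerivAt f' (f'' y) y)
    (hode : ∀ y ∈ Icc a b, f'' y + (q y : ℂ) * f y = 0) :
    (conj (f b) * f' b).im = (conj (f a) * f' a).im := by
  have hderiv : ∀ y ∈ Icc a b, HasDerivAt (fun t => (conj (f t) * f' t).im) 0 y := by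
    intro y hy
    have hf''y : f'' y = -(q y * f y) := eq_neg_of_add_eq_zero_left (hode y hy)
    convert hasDerivAt_im_conj_mul (hf' y hy) (hf'' y hy) using 1
    rw [hf''y]
    simp only [add_im, mul_im, neg_im, neg_re, mul_re, conj_re, conj_im, ofReal_re, ofReal_im]
    ring
  refine constant_of_has_deriv_right_zero
    (fun y hy => (hderiv y hy).continuousAt.continuousWithinAt)
    (fun y hy => (hderiv y (Ico_subset_Icc_self hy)).hasDerivWithinAt) b ⟨hab, le_rfl⟩

theorem im_conj_mul_I_mul_ofReal_mul (z : ℂ) (β : ℝ) :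
    (conj z * (I * β * z)).im = β * ‖z‖ ^ 2 := by
  rw [Complex.sq_norm, normSq_apply]
  simp only [mul_im, mul_re, conj_re, conj_im, I_re, I_im, ofReal_re, ofReal_im]
  ring

theorem robin_bvp_energy_identity_general
    (y0 y1 : ℝ) (h01 : y0 < y1)
    (ε : ℝ → ℝ)
    (k0 α βp βm : ℝ) (hβp : 0 < βp) (hβm : 0 ≤ βm)
    (f f' f'' : ℝ → ℂ)
    (hf' : ∀ y ∈ Icc y0 y1, HasDerivAt f (f' y) y)
    (hf'' : ∀ y ∈ Icc y0 y1, HasDerivAt f' (f'' y) y)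
    (hode : ∀ y ∈ Icc y0 y1, f'' y + ((k0 ^ 2 * ε y - α ^ 2 : ℝ) : ℂ) * f y = 0)
    (hbc0 : f' y0 = -Complex.I * (βm : ℂ) * f y0)
    (hbc1 : f' y1 = Complex.I * (βp : ℂ) * f y1) :
    βp * ‖f y1‖ ^ 2 + βm * ‖f y0‖ ^ 2 = 0 ∧
      f y1 = 0 ∧ f' y1 = 0 := by
  have hcurrent := im_conj_mul_deriv_eq_of_ode h01.le hf' hf'' hode
  have hbc0' : f' y0 = I * ((-βm : ℝ) : ℂ) * f y0 := by rw [hbc0]; push_cast; ring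
  rw [hbc1, hbc0', im_conj_mul_I_mul_ofReal_mul, im_conj_mul_I_mul_ofReal_mul] at hcurrent
  have hsum : βp * ‖f y1‖ ^ 2 + βm * ‖f y0‖ ^ 2 = 0 := by linarith
  have hf1 : f y1 = 0 := by
    have h1 : βp * ‖f y1‖ ^ 2 = 0 := by nlinarith [sq_nonneg ‖f y1‖, sq_nonneg ‖f y0‖]
    simpa [hβp.ne'] using h1
  exact ⟨hsum, hf1, by rw [hbc1, hf1, mul_zero]⟩

/-- Energy step for the homogeneous Robin problem: multiplying the ODE by the
conjugate, integrating by parts and taking imaginary parts gives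
`β₊|f(y1)|² + β₋|f(y0)|² = 0`; in particular `f(y1) = 0` and `f'(y1) = 0`. -/
theorem robin_bvp_energy_identity
    (y0 y1 : ℝ) (h01 : y0 < y1)
    (ε : ℝ → ℝ) (hε : ContinuousOn ε (Icc y0 y1))
    (k0 α βp βm : ℝ) (hβp : 0 < βp) (hβm : 0 ≤ βm)
    (f f' f'' : ℝ → ℂ)
    (hf' : ∀ y ∈ Icc y0 y1, HasDerivAt f (f' y) y)
    (hf'' : ∀ y ∈ Icc y0 y1, HasDerivAt f' (f'' y) y)
    (hf''c : ContinuousOn f'' (Icc y0 y1))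
    (hode : ∀ y ∈ Icc y0 y1, f'' y + ((k0 ^ 2 * ε y - α ^ 2 : ℝ) : ℂ) * f y = 0)
    (hbc0 : f' y0 = -Complex.I * (βm : ℂ) * f y0)
    (hbc1 : f' y1 = Complex.I * (βp : ℂ) * f y1) :
    βp * ‖f y1‖ ^ 2 + βm * ‖f y0‖ ^ 2 = 0 ∧
      f y1 = 0 ∧ f' y1 = 0 :=
  robin_bvp_energy_identity_general y0 y1 h01 ε k0 α βp βm hβp hβm f f' f'' hf' hf'' hode hbc0 hbc1
end

section
/- Let $y_0 < y_1$ be real numbers, let $\varepsilon : \mathbb{R} \to \mathbb{R}$ be continuous on $[y_0, y_1]$, let $k_0, \alpha \in \mathbb{R}$, and let $\beta_+ > 0$ and $\beta_- \geq 0$ be real numbers. Then there exists exactly one function $f : [y_0, y_1] \to \mathbb{C}$ that is twice continuously differentiable on $[y_0, y_1]$ and satisfies the boundary value problem $f''(y) + (k_0^2 \varepsilon(y) - \alpha^2) f(y) = 0$ for all $y \in [y_0, y_1]$, $f'(y_0) = -i\beta_- f(y_0)$, and $f'(y_1) = i\beta_+ (f(y_1) - 2)$. -/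
open Set Complex

/-- `f` is a classical (twice continuously differentiable) solution of the
boundary value problem `f'' + (k₀²ε(y) - α²)f = 0` on `[y0, y1]`,
`f'(y0) = -iβ₋ f(y0)`, `f'(y1) = iβ₊ (f(y1) - 2)`. -/
def IsRobinBVPSol (y0 y1 k0 α βp βm : ℝ) (ε : ℝ → ℝ) (f : ℝ → ℂ) : Prop :=
  ∃ f' f'' : ℝ → ℂ,
    (∀ y ∈ Icc y0 y1, HasDerivAt f (f' y) y) ∧
    (∀ y ∈ Icc y0 y1, HasDerivAt f' (f'' y) y) ∧
    ContinuousOn f'' (Icc y0 y1) ∧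
    (∀ y ∈ Icc y0 y1, f'' y + ((k0 ^ 2 * ε y - α ^ 2 : ℝ) : ℂ) * f y = 0) ∧
    f' y0 = -Complex.I * (βm : ℂ) * f y0 ∧
    f' y1 = Complex.I * (βp : ℂ) * (f y1 - 2)

/-!
For a solution of `u'' + q u = 0` with `q` real, `Im (conj u * u')` is constant: it is half the
Wronskian of the two solutions `conj u` and `u`. Under homogeneous Robin conditions it equals
`β₊ |u y1|²` at `y1` and `-β₋ |u y0|²` at `y0`, so `u y1 = u' y1 = 0`, and `u = 0` by backward
uniqueness for the initial value problem. This gives uniqueness. For existence, the solution `u`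
with `u y0 = 1`, `u' y0 = -iβ₋` is therefore not a homogeneous solution, i.e.
`u' y1 - iβ₊ u y1 ≠ 0`, and a multiple of `u` meets the inhomogeneous condition at `y1`.

The initial value problem is solved on the whole interval by Picard–Lindelöf: for a vector field
that is `K`-Lipschitz and vanishes at `0`, the local solution lives on any interval of length
`1 / (2K)` whatever the initial value, so such pieces can be glued.
-/

open NNReal ComplexConjugate

section LinearGrowthODE

variable {E : Type*} [NormedAddCommGroup E] [NormedSpace ℝ E]
  {v : ℝ → E → E} {γ γ' : ℝ → E} {s s' : Set ℝ}

lemma IsIntegralCurveOn.congr (h : IsIntegralCurveOn γ v s) (hγ : EqOn γ' γ s) :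
    IsIntegralCurveOn γ' v s := fun t ht => by
  simpa only [hγ ht] using (h t ht).congr_of_mem (fun y hy => hγ hy) ht

lemma IsIntegralCurveOn.union_of_isClosed (h : IsIntegralCurveOn γ v s)
    (h' : IsIntegralCurveOn γ v s') (hs : IsClosed s) (hs' : IsClosed s') :
    IsIntegralCurveOn γ v (s ∪ s') := by
  have within (u : Set ℝ) (hu : IsClosed u) (hγ : IsIntegralCurveOn γ v u) (t : ℝ) :
      HasDerivWithinAt γ (v t (γ t)) u t := by
    by_cases ht : t ∈ u
    · exact hγ t ht
    · exact HasFDerivWithinAt.of_notMem_closure (hu.closure_eq.symm ▸ ht)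
  exact fun t _ => (within s hs h t).union (within s' hs' h' t)

lemma IsIntegralCurveOn.exists_Icc_glue {a b c : ℝ} (hab : a ≤ b) (hbc : b ≤ c)
    (h : IsIntegralCurveOn γ v (Icc a b)) (h' : IsIntegralCurveOn γ' v (Icc b c))
    (hb : γ b = γ' b) :
    ∃ δ : ℝ → E, EqOn δ γ (Icc a b) ∧ EqOn δ γ' (Icc b c) ∧ IsIntegralCurveOn δ v (Icc a c) := by
  classical
  have left : EqOn ((Iic b).piecewise γ γ') γ (Icc a b) := fun t ht =>
    piecewise_eq_of_mem _ _ _ ht.2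
  have right : EqOn ((Iic b).piecewise γ γ') γ' (Icc b c) := by
    intro t ht
    rcases ht.1.eq_or_lt with rfl | hbt
    · simpa using hb
    · exact piecewise_eq_of_notMem _ _ _ (not_le.mpr hbt)
  refine ⟨_, left, right, ?_⟩
  rw [← Icc_union_Icc_eq_Icc hab hbc]
  exact (h.congr left).union_of_isClosed (h'.congr right) isClosed_Icc isClosed_Icc

variable [CompleteSpace E] {K : ℝ≥0} (hK : ∀ t ∈ s, LipschitzWith K (v t))
  (hv : ∀ t ∈ s, v t 0 = 0) (hc : ∀ x, ContinuousOn (v · x) s)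
include hK hv hc

lemma exists_isIntegralCurveOn_Icc_of_two_mul_le_one {a b t₀ : ℝ} (hs : Icc a b ⊆ s)
    (ht₀ : t₀ ∈ Icc a b) (hab : 2 * K * (b - a) ≤ 1) (x₀ : E) :
    ∃ γ : ℝ → E, γ t₀ = x₀ ∧ IsIntegralCurveOn γ v (Icc a b) := by
  have hpl : IsPicardLindelof v ⟨t₀, ht₀⟩ x₀ ‖x₀‖₊ 0 (2 * K * ‖x₀‖₊) K := by
    refine ⟨fun t ht => (hK t (hs ht)).lipschitzOnWith, fun x _ => (hc x).mono hs, ?_, ?_⟩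
    · intro t ht x hx
      have hx : ‖x‖ ≤ 2 * ‖x₀‖ := by
        have := norm_le_norm_add_norm_sub' x x₀
        rw [mem_closedBall_iff_norm, coe_nnnorm] at hx
        linarith
      calc ‖v t x‖ = ‖v t x - v t 0‖ := by rw [hv t (hs ht), sub_zero]
        _ ≤ K * ‖x - 0‖ := (hK t (hs ht)).norm_sub_le x 0
        _ ≤ 2 * K * ‖x₀‖ := by rw [sub_zero]; nlinarith [K.coe_nonneg]
    · have hmax : max (b - t₀) (t₀ - a) ≤ b - a :=
        max_le (by linarith [ht₀.1]) (by linarith [ht₀.2])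
      simp only [NNReal.coe_mul, NNReal.coe_ofNat, coe_nnnorm, NNReal.coe_zero, sub_zero]
      calc 2 * K * ‖x₀‖ * max (b - t₀) (t₀ - a) ≤ ‖x₀‖ * (2 * K * (b - a)) := by
            rw [mul_right_comm, mul_comm ‖x₀‖]; gcongr
        _ ≤ ‖x₀‖ := mul_le_of_le_one_right (norm_nonneg _) hab
  exact hpl.exists_eq_forall_mem_Icc_hasDerivWithinAt₀

lemma exists_isIntegralCurveOn_Icc_of_two_mul_le_natCast (n : ℕ) {a b t₀ : ℝ}
    (hs : Icc a b ⊆ s) (ht₀ : t₀ ∈ Icc a b) (hab : 2 * K * (b - a) ≤ n) (x₀ : E) :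
    ∃ γ : ℝ → E, γ t₀ = x₀ ∧ IsIntegralCurveOn γ v (Icc a b) := by
  induction n generalizing a b t₀ x₀ with
  | zero =>
    exact exists_isIntegralCurveOn_Icc_of_two_mul_le_one hK hv hc hs ht₀
      (hab.trans (by simp)) x₀
  | succ n ih =>
    by_cases hshort : 2 * K * (b - a) ≤ 1
    · exact exists_isIntegralCurveOn_Icc_of_two_mul_le_one hK hv hc hs ht₀ hshort x₀
    have hK0 : (0 : ℝ) < K := by
      by_contra! h
      simp [le_antisymm h K.coe_nonneg] at hshort
    set c := a + 1 / (2 * K) with hc_def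
    have hac : 2 * K * (c - a) = 1 := by rw [hc_def]; field_simp; ring
    have hcb : 2 * K * (b - c) ≤ n := by push_cast at hab; linarith
    have hac' : a ≤ c := by nlinarith
    have hcb' : c ≤ b := by nlinarith
    have hsl : Icc a c ⊆ s := (Icc_subset_Icc_right hcb').trans hs
    have hsr : Icc c b ⊆ s := (Icc_subset_Icc_left hac').trans hs
    rcases le_total t₀ c with h | h
    · obtain ⟨γ, hγ₀, hγ⟩ :=
        exists_isIntegralCurveOn_Icc_of_two_mul_le_one hK hv hc hsl ⟨ht₀.1, h⟩ hac.le x₀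
      obtain ⟨γ', hγ'c, hγ'⟩ := ih hsr ⟨le_rfl, hcb'⟩ hcb (γ c)
      obtain ⟨δ, hδ, -, hδv⟩ := hγ.exists_Icc_glue hac' hcb' hγ' hγ'c.symm
      exact ⟨δ, (hδ ⟨ht₀.1, h⟩).trans hγ₀, hδv⟩
    · obtain ⟨γ', hγ'₀, hγ'⟩ := ih hsr ⟨h, ht₀.2⟩ hcb x₀
      obtain ⟨γ, hγc, hγ⟩ :=
        exists_isIntegralCurveOn_Icc_of_two_mul_le_one hK hv hc hsl ⟨hac', le_rfl⟩ hac.le (γ' c)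
      obtain ⟨δ, -, hδ, hδv⟩ := hγ.exists_Icc_glue hac' hcb' hγ' hγc
      exact ⟨δ, (hδ ⟨h, ht₀.2⟩).trans hγ'₀, hδv⟩

theorem exists_isIntegralCurveOn_Icc_of_lipschitzWith {a b t₀ : ℝ} (hs : Icc a b ⊆ s)
    (ht₀ : t₀ ∈ Icc a b) (x₀ : E) :
    ∃ γ : ℝ → E, γ t₀ = x₀ ∧ IsIntegralCurveOn γ v (Icc a b) :=
  exists_isIntegralCurveOn_Icc_of_two_mul_le_natCast hK hv hc _ hs ht₀ (Nat.le_ceil _) x₀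

end LinearGrowthODE

section LinearSecondOrder

variable {E : Type*} [NormedAddCommGroup E] [NormedSpace ℝ E] {q : ℝ → ℝ} {s : Set ℝ}
  {u u' v v' : ℝ → E} {a b : ℝ}

def secondOrderField (q : ℝ → ℝ) (t : ℝ) (p : E × E) : E × E := (p.2, -(q t • p.1))

def SolvesLinearSecondOrder (q : ℝ → ℝ) (s : Set ℝ) (u u' : ℝ → E) : Prop :=
  ∀ t ∈ s, HasDerivAt u (u' t) t ∧ HasDerivAt u' (-(q t • u t)) t

namespace SolvesLinearSecondOrder

lemma mono {s' : Set ℝ} (h : SolvesLinearSecondOrder q s u u') (hs : s' ⊆ s) :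
    SolvesLinearSecondOrder q s' u u' := fun t ht => h t (hs ht)

lemma sub (hu : SolvesLinearSecondOrder q s u u') (hv : SolvesLinearSecondOrder q s v v') :
    SolvesLinearSecondOrder q s (u - v) (u' - v') := fun t ht =>
  ⟨(hu t ht).1.sub (hv t ht).1, by
    simpa only [sub_eq_add_neg, Pi.sub_apply, smul_add, smul_neg, neg_add_rev, neg_neg, add_comm]
      using (hu t ht).2.sub (hv t ht).2⟩

lemma const_smul (c : ℂ) {u u' : ℝ → ℂ} (hu : SolvesLinearSecondOrder q s u u') :
    SolvesLinearSecondOrder q s (c • u) (c • u') := fun t ht =>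
  ⟨(hu t ht).1.const_smul c, by
    convert (hu t ht).2.const_smul c using 1
    simp only [Pi.smul_apply, smul_eq_mul, real_smul]
    ring⟩

lemma continuousOn (h : SolvesLinearSecondOrder q s u u') : ContinuousOn u s :=
  fun t ht => (h t ht).1.continuousAt.continuousWithinAt

lemma hasDerivAt_prod (h : SolvesLinearSecondOrder q s u u') {t : ℝ} (ht : t ∈ s) :
    HasDerivAt (fun t => (u t, u' t)) (secondOrderField q t (u t, u' t)) t :=
  (h t ht).1.prodMk (h t ht).2

end SolvesLinearSecondOrder

lemma secondOrderField_lipschitzWith (q : ℝ → ℝ) (t : ℝ) :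
    LipschitzWith (max 1 ‖q t‖₊) (secondOrderField (E := E) q t) := by
  have hfst := (lipschitzWith_smul (q t)).comp (LipschitzWith.prod_fst (α := E) (β := E))
  rw [mul_one] at hfst
  exact LipschitzWith.prod_snd.prodMk hfst.neg

lemma exists_lipschitzWith_secondOrderField (hq : ContinuousOn q (Icc a b)) :
    ∃ K, ∀ t ∈ Icc a b, LipschitzWith K (secondOrderField (E := E) q t) := by
  obtain ⟨C, hC⟩ := isCompact_Icc.bddAbove_image hq.nnnorm
  exact ⟨max 1 C, fun t ht => (secondOrderField_lipschitzWith q t).weaken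
    (max_le_max le_rfl (hC (mem_image_of_mem _ ht)))⟩

theorem SolvesLinearSecondOrder.eqOn_zero_of_right (hq : ContinuousOn q (Icc a b))
    (h : SolvesLinearSecondOrder q (Icc a b) u u') (hb : u b = 0) (hb' : u' b = 0) :
    EqOn u 0 (Icc a b) := by
  obtain ⟨K, hK⟩ := exists_lipschitzWith_secondOrderField (E := E) hq
  have hzero : EqOn (fun t => (u t, u' t)) 0 (Icc a b) :=
    ODE_solution_unique_of_mem_Icc_left (s := fun _ => univ)
      (fun t ht => (hK t (Ioc_subset_Icc_self ht)).lipschitzOnWith)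
      (fun t ht => (h.hasDerivAt_prod ht).continuousAt.continuousWithinAt)
      (fun t ht => (h.hasDerivAt_prod (Ioc_subset_Icc_self ht)).hasDerivWithinAt)
      (fun _ _ => mem_univ _) continuousOn_const
      (fun t _ => by
        rw [show secondOrderField q t ((0 : ℝ → E × E) t) = 0 by simp [secondOrderField]]
        exact hasDerivWithinAt_const t _ 0)
      (fun _ _ => mem_univ _) (by simp [hb, hb'])
  exact fun t ht => congrArg Prod.fst (hzero ht)

variable [CompleteSpace E]

theorem exists_solvesLinearSecondOrder (hq : ContinuousOn q (Icc a b)) {t₀ : ℝ}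
    (ht₀ : t₀ ∈ Icc a b) (x₀ x₁ : E) :
    ∃ u u' : ℝ → E, u t₀ = x₀ ∧ u' t₀ = x₁ ∧ SolvesLinearSecondOrder q (Ioo a b) u u' := by
  obtain ⟨K, hK⟩ := exists_lipschitzWith_secondOrderField (E := E) hq
  have hc (p : E × E) : ContinuousOn (secondOrderField q · p) (Icc a b) :=
    continuousOn_const.prodMk (hq.smul continuousOn_const).neg
  obtain ⟨γ, hγ₀, hγ⟩ := exists_isIntegralCurveOn_Icc_of_lipschitzWith hK
    (fun t _ => by simp [secondOrderField]) hc subset_rfl ht₀ (x₀, x₁)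
  refine ⟨fun t => (γ t).1, fun t => (γ t).2, by simp [hγ₀], by simp [hγ₀], fun t ht => ?_⟩
  have hγt := (hγ t (Ioo_subset_Icc_self ht)).hasDerivAt (Icc_mem_nhds ht.1 ht.2)
  exact ⟨(ContinuousLinearMap.fst ℝ E E).hasFDerivAt.comp_hasDerivAt t hγt,
    (ContinuousLinearMap.snd ℝ E E).hasFDerivAt.comp_hasDerivAt t hγt⟩

end LinearSecondOrder

section Robin

variable {q : ℝ → ℝ} {u u' : ℝ → ℂ} {a b : ℝ}

theorem SolvesLinearSecondOrder.im_conj_mul_eq (hab : a ≤ b)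
    (h : SolvesLinearSecondOrder q (Icc a b) u u') :
    (conj (u b) * u' b).im = (conj (u a) * u' a).im := by
  have hderiv : ∀ t ∈ Icc a b, HasDerivAt (fun t => (conj (u t) * u' t).im) 0 t := by
    intro t ht
    refine (Complex.imCLM.hasFDerivAt.comp_hasDerivAt t
      ((h t ht).1.star.mul (h t ht).2)).congr_deriv ?_
    simp only [RCLike.star_def, real_smul, mul_neg, imCLM_apply, add_im, mul_im, neg_im,
      mul_re, conj_re, conj_im, ofReal_re, ofReal_im]
    ring
  exact constant_of_has_deriv_right_zero
    (fun t ht => (hderiv t ht).continuousAt.continuousWithinAt)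
    (fun t ht => (hderiv t (Ico_subset_Icc_self ht)).hasDerivWithinAt) b ⟨hab, le_rfl⟩

theorem SolvesLinearSecondOrder.eqOn_zero_of_robin {βp βm : ℝ} (hq : ContinuousOn q (Icc a b))
    (hab : a ≤ b) (h : SolvesLinearSecondOrder q (Icc a b) u u') (hβp : 0 < βp) (hβm : 0 ≤ βm)
    (ha : u' a = -I * βm * u a) (hb : u' b = I * βp * u b) :
    EqOn u 0 (Icc a b) := by
  have hflux := h.im_conj_mul_eq hab
  rw [ha, hb] at hflux
  have hflux' : βp * normSq (u b) = -(βm * normSq (u a)) := by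
    simp only [mul_im, mul_re, conj_re, conj_im, I_re, I_im, ofReal_re, ofReal_im, neg_re, neg_im,
      normSq_apply] at hflux ⊢
    linarith
  have hub : u b = 0 := by
    have := normSq_nonneg (u a)
    have := normSq_nonneg (u b)
    exact normSq_eq_zero.mp (by nlinarith)
  exact h.eqOn_zero_of_right hq hub (by rw [hb, hub, mul_zero])

end Robin

lemma ContinuousOn.exists_continuous_eqOn_Icc {α β : Type*} [LinearOrder α] [TopologicalSpace α]
    [OrderTopology α] [TopologicalSpace β] {f : α → β} {a b : α} (hab : a ≤ b)
    (hf : ContinuousOn f (Icc a b)) : ∃ g : α → β, Continuous g ∧ EqOn g f (Icc a b) :=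
  ⟨IccExtend hab ((Icc a b).domRestrict f),
    (continuousOn_iff_continuous_domRestrict.1 hf).Icc_extend',
    fun _ hx => IccExtend_of_mem hab _ hx⟩

lemma isRobinBVPSol_iff {y0 y1 k0 α βp βm : ℝ} {ε q : ℝ → ℝ} (hq : ContinuousOn q (Icc y0 y1))
    (hqε : ∀ y ∈ Icc y0 y1, q y = k0 ^ 2 * ε y - α ^ 2) {f : ℝ → ℂ} :
    IsRobinBVPSol y0 y1 k0 α βp βm ε f ↔
      ∃ f' : ℝ → ℂ, SolvesLinearSecondOrder q (Icc y0 y1) f f' ∧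
        f' y0 = -I * βm * f y0 ∧ f' y1 = I * βp * (f y1 - 2) := by
  constructor
  · rintro ⟨f', f'', hf, hf', -, hode, h0, h1⟩
    refine ⟨f', fun y hy => ⟨hf y hy, ?_⟩, h0, h1⟩
    have hf'' : f'' y = -(q y • f y) := by
      rw [real_smul, hqε y hy]
      linear_combination hode y hy
    exact hf'' ▸ hf' y hy
  · rintro ⟨f', hf, h0, h1⟩
    refine ⟨f', fun y => -(q y • f y), fun y hy => (hf y hy).1, fun y hy => (hf y hy).2,
      (hq.smul hf.continuousOn).neg, fun y hy => ?_, h0, h1⟩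
    show -(q y • f y) + _ = 0
    rw [hqε y hy, real_smul]
    ring

/-- The inhomogeneous Robin boundary value problem of Proposition A.2 has a
solution, and any two solutions coincide on `[y0, y1]`. -/
theorem robin_bvp_exists_unique
    (y0 y1 : ℝ) (h01 : y0 < y1)
    (ε : ℝ → ℝ) (hε : ContinuousOn ε (Icc y0 y1))
    (k0 α βp βm : ℝ) (hβp : 0 < βp) (hβm : 0 ≤ βm) :
    (∃ f : ℝ → ℂ, IsRobinBVPSol y0 y1 k0 α βp βm ε f) ∧
      (∀ f g : ℝ → ℂ, IsRobinBVPSol y0 y1 k0 α βp βm ε f →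
        IsRobinBVPSol y0 y1 k0 α βp βm ε g → EqOn f g (Icc y0 y1)) := by
  -- `IsRobinBVPSol` asks for two-sided derivatives at `y0` and `y1`, so we solve on a larger
  -- interval, with `ε` extended continuously
  obtain ⟨ε', hε', hε'ε⟩ := hε.exists_continuous_eqOn_Icc h01.le
  set q : ℝ → ℝ := fun t => k0 ^ 2 * ε' t - α ^ 2
  have hq : Continuous q := by fun_prop
  have hqε : ∀ y ∈ Icc y0 y1, q y = k0 ^ 2 * ε y - α ^ 2 := fun y hy => by simp [q, hε'ε hy]
  have hrobin (f : ℝ → ℂ) :=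
    isRobinBVPSol_iff (βp := βp) (βm := βm) (f := f) hq.continuousOn hqε
  obtain ⟨u, u', hu₀, hu'₀, hu⟩ := exists_solvesLinearSecondOrder (a := y0 - 1) (b := y1 + 1)
    (t₀ := y0) hq.continuousOn ⟨by linarith, by linarith⟩ (1 : ℂ) (-I * βm)
  replace hu : SolvesLinearSecondOrder q (Icc y0 y1) u u' :=
    hu.mono (Icc_subset_Ioo (by linarith) (by linarith))
  have hD : u' y1 - I * βp * u y1 ≠ 0 := fun hD => by
    simpa [hu₀] using hu.eqOn_zero_of_robin hq.continuousOn h01.le hβp hβm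
      (by rw [hu₀, hu'₀, mul_one]) (sub_eq_zero.mp hD) (left_mem_Icc.2 h01.le)
  refine ⟨⟨(-2 * I * βp / (u' y1 - I * βp * u y1)) • u,
    (hrobin _).2 ⟨_, hu.const_smul _, ?_, ?_⟩⟩, fun f g hf hg => ?_⟩
  · simp only [Pi.smul_apply, smul_eq_mul, hu₀, hu'₀]
    ring
  · simp only [Pi.smul_apply, smul_eq_mul]
    field_simp
    ring
  · obtain ⟨f', hf, hf₀, hf₁⟩ := (hrobin f).1 hf
    obtain ⟨g', hg, hg₀, hg₁⟩ := (hrobin g).1 hg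
    have hfg := (hf.sub hg).eqOn_zero_of_robin hq.continuousOn h01.le hβp hβm
      (by simp only [Pi.sub_apply, hf₀, hg₀]; ring) (by simp only [Pi.sub_apply, hf₁, hg₁]; ring)
    exact fun y hy => sub_eq_zero.mp (hfg hy)
end

section
/- Let $y_0 \leq 0 \leq y_1$ with $y_0 < y_1$, let $k_0 > 0$, $\varepsilon_+ > 0$, $\varepsilon_- > 0$, and let $\alpha \in \mathbb{R}$ satisfy $\alpha^2 < k_0^2 \varepsilon_+$ and $\alpha^2 \leq k_0^2 \varepsilon_-$. Set $\beta_+ = \sqrt{k_0^2\varepsilon_+ - \alpha^2} > 0$ and $\beta_- = \sqrt{k_0^2\varepsilon_- - \alpha^2} \geq 0$. Let $\tilde\varepsilon : \mathbb{R} \to \mathbb{R}$ be continuous on $[y_0, y_1]$ and let $f$ be twice continuously differentiable on $[y_0,y_1]$ with $f'' + (k_0^2\tilde\varepsilon(y) - \alpha^2)f = 0$ on $[y_0,y_1]$, $f'(y_0) = -i\beta_- f(y_0)$, and $f'(y_1) = i\beta_+(f(y_1) - 2)$. Define $R_2 = f(y_1) - 1$, $T_2 = f(y_0)$, and define $u :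 \mathbb{R}^2 \to \mathbb{C}$ by $u(x,y) = e^{-i\beta_+ y_1} e^{i\alpha x}\big(e^{-i\beta_+(y - y_1)} + R_2 e^{i\beta_+(y - y_1)}\big)$ for $y \geq y_1$, $u(x,y) = e^{-i\beta_+ y_1} e^{i\alpha x} f(y)$ for $y_0 < y < y_1$, and $u(x,y) = e^{-i\beta_+ y_1} T_2\, e^{i(\alpha x - \beta_-(y - y_0))}$ for $y \leq y_0$. Then: (i) $u$ is continuous on $\mathbb{R}^2$; (ii) the partial derivative $\partial_y u$ extends continuously across the lines $y = y_0$ and $y = y_1$ (i.e.\ the one-sided limits of $\partial_y u$ from above and below agree on these lines); (iii) $\partial_x^2 u + \partial_y^2 u + k_0^2 \varepsilon_+ u = 0$ for $y > y_1$, $\partial_x^2 u + \partial_y^2 u + k_0^2 \tilde\varepsilon(y) u = 0$ for $y_0 < y < y_1$, and $\partial_x^2 u + \partial_y^2 u + k_0^2 \varepsilon_- u = 0$ for $y < y_0$. -/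
/-!
Writing `P = e^{-iβ₊y₁}`, the field separates as `u(x, y) = P e^{iαx} g(y)`, where the profile
`g` glues `e^{-iβ₊(y-y₁)} + R₂ e^{iβ₊(y-y₁)}`, `f` and `T₂ e^{-iβ₋(y-y₀)}`. The Helmholtz
equation then reduces to `g'' + (k₀²ε - α²) g = 0` in each layer, which holds for the outer
layers because `β±² = k₀²ε± - α²`, and for the middle one by the ODE for `f`. Continuity of
`u` and of `∂_y u` reduce to continuity of `g` and of its layerwise derivative: at the
interfaces the first is the definition of `R₂` and `T₂`, the second the Robin conditions.
-/

open Set Complex Filter Topology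

section Calculus

variable {F : Type*} [NormedAddCommGroup F] [NormedSpace ℝ F]

theorem iteratedDeriv_two_eq_of_hasDerivAt {g g' : ℝ → F} {g'' : F} {x : ℝ}
    (h1 : ∀ᶠ t in 𝓝 x, HasDerivAt g (g' t) t) (h2 : HasDerivAt g' g'' x) :
    iteratedDeriv 2 g x = g'' := by
  have hg : deriv g =ᶠ[𝓝 x] g' := h1.mono fun _ ht => ht.deriv
  rw [iteratedDeriv_succ, iteratedDeriv_one, hg.deriv_eq, h2.deriv]

theorem tendsto_deriv_of_eventually_hasDerivAt {g g' : ℝ → F} {l : Filter ℝ} {c : ℝ}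
    (hl : l ≤ 𝓝 c) (h : ∀ᶠ t in l, HasDerivAt g (g' t) t) (hg' : ContinuousAt g' c) :
    Tendsto (deriv g) l (𝓝 (g' c)) :=
  (hg'.tendsto.mono_left hl).congr' (h.mono fun _ ht => ht.deriv.symm)

end Calculus

theorem hasDerivAt_cexp_mul_ofReal_sub (k : ℂ) (c t : ℝ) :
    HasDerivAt (fun s : ℝ => cexp (k * ↑(s - c))) (k * cexp (k * ↑(t - c))) t := by
  have h : HasDerivAt (fun s : ℝ => k * ↑(s - c)) k t := by
    simpa using (((hasDerivAt_id t).sub_const c).ofReal_comp).const_mul k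
  simpa [mul_comm] using h.cexp

noncomputable def wavePair (k A B : ℂ) (c t : ℝ) : ℂ :=
  A * cexp (k * ↑(t - c)) + B * cexp (-k * ↑(t - c))

theorem hasDerivAt_wavePair (k A B : ℂ) (c t : ℝ) :
    HasDerivAt (wavePair k A B c) (wavePair k (k * A) (-k * B) c t) t := by
  have := ((hasDerivAt_cexp_mul_ofReal_sub k c t).const_mul A).add
    ((hasDerivAt_cexp_mul_ofReal_sub (-k) c t).const_mul B)
  refine this.congr_deriv ?_
  unfold wavePair; ring

@[fun_prop]
theorem continuous_wavePair (k A B : ℂ) (c : ℝ) : Continuous (wavePair k A B c) := by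
  unfold wavePair; fun_prop

@[simp]
theorem wavePair_self (k A B : ℂ) (c : ℝ) : wavePair k A B c c = A + B := by
  simp [wavePair]

theorem iteratedDeriv_two_wavePair (k A B : ℂ) (c t : ℝ) :
    iteratedDeriv 2 (wavePair k A B c) t = k ^ 2 * wavePair k A B c t := by
  rw [iteratedDeriv_two_eq_of_hasDerivAt (.of_forall (hasDerivAt_wavePair _ _ _ _))
    (hasDerivAt_wavePair _ _ _ _ t)]
  unfold wavePair; ring

theorem iteratedDeriv_two_cexp_I_mul (α x : ℝ) :
    iteratedDeriv 2 (fun t : ℝ => cexp (I * ↑(α * t))) x = -α ^ 2 * cexp (I * ↑(α * x)) := by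
  have h : (fun t : ℝ => cexp (I * ↑(α * t))) = wavePair (I * α) 1 0 0 := by
    ext t; simp [wavePair, mul_assoc]
  rw [h, iteratedDeriv_two_wavePair, ← h, mul_pow, I_sq]
  ring

theorem helmholtz_separated (c κ : ℂ) (α : ℝ) (g : ℝ → ℂ) (x y : ℝ) :
    iteratedDeriv 2 (fun t => c * cexp (I * ↑(α * t)) * g y) x +
        iteratedDeriv 2 (fun t => c * cexp (I * ↑(α * x)) * g t) y +
        κ * (c * cexp (I * ↑(α * x)) * g y) =
      c * cexp (I * ↑(α * x)) * (iteratedDeriv 2 g y + (κ - α ^ 2) * g y) := by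
  simp only [mul_assoc c, iteratedDeriv_const_mul_field, iteratedDeriv_mul_const_field,
    iteratedDeriv_two_cexp_I_mul]
  ring

theorem ofReal_sub_sq_eq_sqrt_sq {κ α : ℝ} (h : α ^ 2 ≤ κ) :
    (κ : ℂ) - α ^ 2 = (√(κ - α ^ 2) : ℂ) ^ 2 := by
  exact_mod_cast (Real.sq_sqrt (sub_nonneg.2 h)).symm

noncomputable def layered {X : Type*} (y0 y1 : ℝ) (a b c : ℝ → X) (t : ℝ) : X :=
  if y1 ≤ t then a t else if y0 < t then b t else c t

section Layered

variable {X : Type*} {F : Type*} [NormedAddCommGroup F] [NormedSpace ℝ F] {y0 y1 t : ℝ}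
  {a b c : ℝ → X}

theorem layered_eventuallyEq_top (h : y1 < t) : layered y0 y1 a b c =ᶠ[𝓝 t] a := by
  filter_upwards [Ioi_mem_nhds h] with s hs
  exact if_pos (le_of_lt hs)

theorem layered_eventuallyEq_mid (h : t ∈ Ioo y0 y1) : layered y0 y1 a b c =ᶠ[𝓝 t] b := by
  filter_upwards [Ioo_mem_nhds h.1 h.2] with s hs
  simp [layered, not_le.2 hs.2, hs.1]

theorem layered_eventuallyEq_bot (h01 : y0 ≤ y1) (h : t < y0) :
    layered y0 y1 a b c =ᶠ[𝓝 t] c := by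
  filter_upwards [Iio_mem_nhds h] with s (hs : s < y0)
  simp [layered, not_le.2 (hs.trans_le h01), not_lt.2 hs.le]

theorem continuous_layered [TopologicalSpace X] (h01 : y0 ≤ y1) (ha : Continuous a)
    (hb : ContinuousOn b (Icc y0 y1)) (hc : Continuous c) (h1 : a y1 = b y1) (h0 : b y0 = c y0) :
    Continuous (layered y0 y1 a b c) := by
  have htop : ContinuousOn (layered y0 y1 a b c) (Ici y1) :=
    ha.continuousOn.congr fun t ht => if_pos ht
  have hmid : ContinuousOn (layered y0 y1 a b c) (Icc y0 y1) := by
    refine hb.congr fun t ht => ?_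
    unfold layered
    split_ifs with h h'
    · rw [le_antisymm ht.2 h, h1]
    · rfl
    · rw [le_antisymm (not_lt.1 h') ht.1, h0]
  have hbot : ContinuousOn (layered y0 y1 a b c) (Iic y0) := by
    refine hc.continuousOn.congr fun t ht => ?_
    unfold layered
    split_ifs with h h'
    · have := le_antisymm (h.trans ht) h01
      subst this
      rw [le_antisymm ht h, h1, h0]
    · exact absurd h' (not_lt.2 ht)
    · rfl
  rw [← continuousOn_univ]
  convert (htop.union_of_isClosed hmid isClosed_Ici isClosed_Icc).union_of_isClosed hbot
    (isClosed_Ici.union isClosed_Icc) isClosed_Iic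
  ext t
  simp only [mem_univ, mem_union, mem_Ici, mem_Icc, mem_Iic, true_iff]
  grind

theorem hasDerivAt_layered {a b c a' b' c' : ℝ → F} (h01 : y0 ≤ y1)
    (ha : ∀ t, y1 < t → HasDerivAt a (a' t) t)
    (hb : ∀ t ∈ Ioo y0 y1, HasDerivAt b (b' t) t) (hc : ∀ t, t < y0 → HasDerivAt c (c' t) t)
    (ht0 : t ≠ y0) (ht1 : t ≠ y1) :
    HasDerivAt (layered y0 y1 a b c) (layered y0 y1 a' b' c' t) t := by
  rcases ht1.lt_or_gt with ht1 | ht1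
  · rcases ht0.lt_or_gt with ht0 | ht0
    · rw [(layered_eventuallyEq_bot h01 ht0).eq_of_nhds]
      exact (hc t ht0).congr_of_eventuallyEq (layered_eventuallyEq_bot h01 ht0)
    · rw [(layered_eventuallyEq_mid ⟨ht0, ht1⟩).eq_of_nhds]
      exact (hb t ⟨ht0, ht1⟩).congr_of_eventuallyEq (layered_eventuallyEq_mid ⟨ht0, ht1⟩)
  · rw [(layered_eventuallyEq_top ht1).eq_of_nhds]
    exact (ha t ht1).congr_of_eventuallyEq (layered_eventuallyEq_top ht1)

theorem tendsto_deriv_layered {a b c a' b' c' : ℝ → F} (h01 : y0 ≤ y1)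
    (ha : ∀ t, y1 < t → HasDerivAt a (a' t) t)
    (hb : ∀ t ∈ Ioo y0 y1, HasDerivAt b (b' t) t) (hc : ∀ t, t < y0 → HasDerivAt c (c' t) t)
    (hd : ContinuousAt (layered y0 y1 a' b' c') t) :
    Tendsto (deriv (layered y0 y1 a b c)) (𝓝[≠] t) (𝓝 (layered y0 y1 a' b' c' t)) := by
  have hne : ∀ z, ∀ᶠ s in 𝓝[≠] t, s ≠ z := fun z => by
    rcases eq_or_ne t z with rfl | h
    · exact self_mem_nhdsWithin
    · exact eventually_ne_nhdsWithin h
  refine tendsto_deriv_of_eventually_hasDerivAt nhdsWithin_le_nhds ?_ hd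
  filter_upwards [hne y0, hne y1] with s hs0 hs1
  exact hasDerivAt_layered h01 ha hb hc hs0 hs1

end Layered

noncomputable def referenceProfile (y0 y1 βp βm : ℝ) (f : ℝ → ℂ) (R2 T2 : ℂ) : ℝ → ℂ :=
  layered y0 y1 (wavePair (I * βp) R2 1 y1) f (wavePair (I * βm) 0 T2 y0)

section ReferenceProfile

variable {y0 y1 βp βm y : ℝ} {f f' f'' : ℝ → ℂ} {R2 T2 : ℂ}

theorem continuous_referenceProfile (h01 : y0 ≤ y1) (hf : ContinuousOn f (Icc y0 y1))
    (hR2 : R2 = f y1 - 1) (hT2 : T2 = f y0) :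
    Continuous (referenceProfile y0 y1 βp βm f R2 T2) :=
  continuous_layered h01 (by fun_prop) hf (by fun_prop) (by simp [hR2]) (by simp [hT2])

theorem exists_tendsto_deriv_referenceProfile (h01 : y0 ≤ y1)
    (hf' : ∀ y ∈ Ioo y0 y1, HasDerivAt f (f' y) y) (hf'c : ContinuousOn f' (Icc y0 y1))
    (hbc0 : f' y0 = -I * βm * f y0) (hbc1 : f' y1 = I * βp * (f y1 - 2))
    (hR2 : R2 = f y1 - 1) (hT2 : T2 = f y0) (y : ℝ) :
    ∃ L, Tendsto (deriv (referenceProfile y0 y1 βp βm f R2 T2)) (𝓝[≠] y) (𝓝 L) := by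
  have hd : Continuous (layered y0 y1 (wavePair (I * βp) (I * βp * R2) (-(I * βp) * 1) y1) f'
      (wavePair (I * βm) (I * βm * 0) (-(I * βm) * T2) y0)) :=
    continuous_layered h01 (by fun_prop) hf'c (by fun_prop)
      (by simp [hbc1, hR2]; ring) (by simp [hbc0, hT2])
  exact ⟨_, tendsto_deriv_layered h01 (fun t _ => hasDerivAt_wavePair _ _ _ _ t) hf'
    (fun t _ => hasDerivAt_wavePair _ _ _ _ t) hd.continuousAt⟩

theorem referenceProfile_ode_top (hy : y1 < y) :
    iteratedDeriv 2 (referenceProfile y0 y1 βp βm f R2 T2) y +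
      βp ^ 2 * referenceProfile y0 y1 βp βm f R2 T2 y = 0 := by
  have h : referenceProfile y0 y1 βp βm f R2 T2 =ᶠ[𝓝 y] wavePair (I * βp) R2 1 y1 :=
    layered_eventuallyEq_top hy
  rw [h.iteratedDeriv_eq, h.eq_of_nhds, iteratedDeriv_two_wavePair, mul_pow, I_sq]
  ring

theorem referenceProfile_ode_mid {q : ℂ} (hf' : ∀ y ∈ Ioo y0 y1, HasDerivAt f (f' y) y)
    (hf'' : HasDerivAt f' (f'' y) y) (hode : f'' y + q * f y = 0) (hy : y ∈ Ioo y0 y1) :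
    iteratedDeriv 2 (referenceProfile y0 y1 βp βm f R2 T2) y +
      q * referenceProfile y0 y1 βp βm f R2 T2 y = 0 := by
  have h : referenceProfile y0 y1 βp βm f R2 T2 =ᶠ[𝓝 y] f := layered_eventuallyEq_mid hy
  rw [h.iteratedDeriv_eq, h.eq_of_nhds,
    iteratedDeriv_two_eq_of_hasDerivAt (eventually_of_mem (Ioo_mem_nhds hy.1 hy.2) hf') hf'', hode]

theorem referenceProfile_ode_bot (h01 : y0 ≤ y1) (hy : y < y0) :
    iteratedDeriv 2 (referenceProfile y0 y1 βp βm f R2 T2) y +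
      βm ^ 2 * referenceProfile y0 y1 βp βm f R2 T2 y = 0 := by
  have h : referenceProfile y0 y1 βp βm f R2 T2 =ᶠ[𝓝 y] wavePair (I * βm) 0 T2 y0 :=
    layered_eventuallyEq_bot h01 hy
  rw [h.iteratedDeriv_eq, h.eq_of_nhds, iteratedDeriv_two_wavePair, mul_pow, I_sq]
  ring

end ReferenceProfile

theorem three_layer_reference_field_general
    (y0 y1 : ℝ) (h01 : y0 < y1)
    (k0 εp εm α : ℝ)
    (hαp : α ^ 2 < k0 ^ 2 * εp) (hαm : α ^ 2 ≤ k0 ^ 2 * εm)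
    (βp βm : ℝ) (hβp : βp = Real.sqrt (k0 ^ 2 * εp - α ^ 2))
    (hβm : βm = Real.sqrt (k0 ^ 2 * εm - α ^ 2))
    (εt : ℝ → ℝ)
    (f f' f'' : ℝ → ℂ)
    (hf' : ∀ y ∈ Icc y0 y1, HasDerivAt f (f' y) y)
    (hf'' : ∀ y ∈ Icc y0 y1, HasDerivAt f' (f'' y) y)
    (hode : ∀ y ∈ Icc y0 y1, f'' y + ((k0 ^ 2 * εt y - α ^ 2 : ℝ) : ℂ) * f y = 0)
    (hbc0 : f' y0 = -Complex.I * (βm : ℂ) * f y0)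
    (hbc1 : f' y1 = Complex.I * (βp : ℂ) * (f y1 - 2))
    (R2 T2 : ℂ) (hR2 : R2 = f y1 - 1) (hT2 : T2 = f y0)
    (u : ℝ → ℝ → ℂ)
    (hu : u = fun x y =>
      if y1 ≤ y then
        Complex.exp (-Complex.I * ((βp * y1 : ℝ) : ℂ)) *
          (Complex.exp (Complex.I * ((α * x : ℝ) : ℂ)) *
            (Complex.exp (-Complex.I * ((βp * (y - y1) : ℝ) : ℂ)) +
              R2 * Complex.exp (Complex.I * ((βp * (y - y1) : ℝ) : ℂ))))
      else if y0 < y then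
        Complex.exp (-Complex.I * ((βp * y1 : ℝ) : ℂ)) *
          (Complex.exp (Complex.I * ((α * x : ℝ) : ℂ)) * f y)
      else
        Complex.exp (-Complex.I * ((βp * y1 : ℝ) : ℂ)) *
          (T2 * Complex.exp (Complex.I * ((α * x - βm * (y - y0) : ℝ) : ℂ)))) :
    -- (i) continuity on ℝ²
    Continuous (fun p : ℝ × ℝ => u p.1 p.2) ∧
    -- (ii) the one-sided limits of ∂_y u from above and below agree on y = y₀ and y = y₁
    (∀ x : ℝ, ∃ Lmt : ℂ,
      Tendsto (fun y => deriv (fun t => u x t) y) (nhdsWithin y0 (Ioi y0)) (nhds Lmt) ∧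
      Tendsto (fun y => deriv (fun t => u x t) y) (nhdsWithin y0 (Iio y0)) (nhds Lmt)) ∧
    (∀ x : ℝ, ∃ Lmt : ℂ,
      Tendsto (fun y => deriv (fun t => u x t) y) (nhdsWithin y1 (Ioi y1)) (nhds Lmt) ∧
      Tendsto (fun y => deriv (fun t => u x t) y) (nhdsWithin y1 (Iio y1)) (nhds Lmt)) ∧
    -- (iii) Helmholtz equation in each open layer
    (∀ x y : ℝ, y1 < y →
      iteratedDeriv 2 (fun t => u t y) x + iteratedDeriv 2 (fun t => u x t) y +
        ((k0 ^ 2 * εp : ℝ) : ℂ) * u x y = 0) ∧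
    (∀ x y : ℝ, y0 < y → y < y1 →
      iteratedDeriv 2 (fun t => u t y) x + iteratedDeriv 2 (fun t => u x t) y +
        ((k0 ^ 2 * εt y : ℝ) : ℂ) * u x y = 0) ∧
    (∀ x y : ℝ, y < y0 →
      iteratedDeriv 2 (fun t => u t y) x + iteratedDeriv 2 (fun t => u x t) y +
        ((k0 ^ 2 * εm : ℝ) : ℂ) * u x y = 0) := by
  set g := referenceProfile y0 y1 βp βm f R2 T2
  set P := cexp (-I * ↑(βp * y1))
  have hsep : u = fun x y => P * cexp (I * ↑(α * x)) * g y := by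
    rw [hu]; funext x y
    simp only [g, referenceProfile, layered, wavePair]
    split_ifs
    · push_cast; ring_nf
    · ring
    · rw [show I * ↑(α * x - βm * (y - y0)) = I * ↑(α * x) + -(I * βm) * ↑(y - y0) by
        push_cast; ring, Complex.exp_add]
      ring
  subst hsep
  have hκp : ((k0 ^ 2 * εp : ℝ) : ℂ) - α ^ 2 = βp ^ 2 := hβp ▸ ofReal_sub_sq_eq_sqrt_sq hαp.le
  have hκm : ((k0 ^ 2 * εm : ℝ) : ℂ) - α ^ 2 = βm ^ 2 := hβm ▸ ofReal_sub_sq_eq_sqrt_sq hαm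
  have hf'Ioo : ∀ y ∈ Ioo y0 y1, HasDerivAt f (f' y) y := fun y hy =>
    hf' y (Ioo_subset_Icc_self hy)
  have hgc : Continuous g := continuous_referenceProfile h01.le
    (fun y hy => (hf' y hy).continuousAt.continuousWithinAt) hR2 hT2
  have hlim := exists_tendsto_deriv_referenceProfile h01.le hf'Ioo
    (fun y hy => (hf'' y hy).continuousAt.continuousWithinAt) hbc0 hbc1 hR2 hT2
  obtain ⟨L0, hL0⟩ := hlim y0
  obtain ⟨L1, hL1⟩ := hlim y1
  simp only [deriv_const_mul_field']
  refine ⟨by fun_prop, fun x => ⟨_, (hL0.const_mul _).mono_left (nhdsGT_le_nhdsNE y0),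
      (hL0.const_mul _).mono_left (nhdsLT_le_nhdsNE y0)⟩,
    fun x => ⟨_, (hL1.const_mul _).mono_left (nhdsGT_le_nhdsNE y1),
      (hL1.const_mul _).mono_left (nhdsLT_le_nhdsNE y1)⟩,
    fun x y hy => ?_, fun x y hy hy' => ?_, fun x y hy => ?_⟩
  · rw [helmholtz_separated, hκp, referenceProfile_ode_top hy, mul_zero]
  · rw [helmholtz_separated, ← ofReal_pow, ← ofReal_sub, referenceProfile_ode_mid hf'Ioo
      (hf'' y ⟨hy.le, hy'.le⟩) (hode y ⟨hy.le, hy'.le⟩) ⟨hy, hy'⟩, mul_zero]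
  · rw [helmholtz_separated, hκm, referenceProfile_ode_bot h01.le hy, mul_zero]

/-- Proposition A.2 (verification part): the piecewise field built from the
solution `f` of the Robin boundary value problem, with `R₂ = f(y₁) - 1` and
`T₂ = f(y₀)`, is continuous, its normal derivative extends continuously across
the interfaces `y = y₀`, `y = y₁`, and it solves the layered Helmholtz
equation in each open layer. -/
theorem three_layer_reference_field
    (y0 y1 : ℝ) (hy0 : y0 ≤ 0) (hy1 : 0 ≤ y1) (h01 : y0 < y1)
    (k0 εp εm α : ℝ) (hk0 : 0 < k0) (hεp : 0 < εp) (hεm : 0 < εm)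
    (hαp : α ^ 2 < k0 ^ 2 * εp) (hαm : α ^ 2 ≤ k0 ^ 2 * εm)
    (βp βm : ℝ) (hβp : βp = Real.sqrt (k0 ^ 2 * εp - α ^ 2))
    (hβm : βm = Real.sqrt (k0 ^ 2 * εm - α ^ 2))
    (εt : ℝ → ℝ) (hεt : ContinuousOn εt (Icc y0 y1))
    (f f' f'' : ℝ → ℂ)
    (hf' : ∀ y ∈ Icc y0 y1, HasDerivAt f (f' y) y)
    (hf'' : ∀ y ∈ Icc y0 y1, HasDerivAt f' (f'' y) y)
    (hf''c : ContinuousOn f'' (Icc y0 y1))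
    (hode : ∀ y ∈ Icc y0 y1, f'' y + ((k0 ^ 2 * εt y - α ^ 2 : ℝ) : ℂ) * f y = 0)
    (hbc0 : f' y0 = -Complex.I * (βm : ℂ) * f y0)
    (hbc1 : f' y1 = Complex.I * (βp : ℂ) * (f y1 - 2))
    (R2 T2 : ℂ) (hR2 : R2 = f y1 - 1) (hT2 : T2 = f y0)
    (u : ℝ → ℝ → ℂ)
    (hu : u = fun x y =>
      if y1 ≤ y then
        Complex.exp (-Complex.I * ((βp * y1 : ℝ) : ℂ)) *
          (Complex.exp (Complex.I * ((α * x : ℝ) : ℂ)) *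
            (Complex.exp (-Complex.I * ((βp * (y - y1) : ℝ) : ℂ)) +
              R2 * Complex.exp (Complex.I * ((βp * (y - y1) : ℝ) : ℂ))))
      else if y0 < y then
        Complex.exp (-Complex.I * ((βp * y1 : ℝ) : ℂ)) *
          (Complex.exp (Complex.I * ((α * x : ℝ) : ℂ)) * f y)
      else
        Complex.exp (-Complex.I * ((βp * y1 : ℝ) : ℂ)) *
          (T2 * Complex.exp (Complex.I * ((α * x - βm * (y - y0) : ℝ) : ℂ)))) :
    -- (i) continuity on ℝ²
    Continuous (fun p : ℝ × ℝ => u p.1 p.2) ∧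
    -- (ii) the one-sided limits of ∂_y u from above and below agree on y = y₀ and y = y₁
    (∀ x : ℝ, ∃ Lmt : ℂ,
      Tendsto (fun y => deriv (fun t => u x t) y) (nhdsWithin y0 (Ioi y0)) (nhds Lmt) ∧
      Tendsto (fun y => deriv (fun t => u x t) y) (nhdsWithin y0 (Iio y0)) (nhds Lmt)) ∧
    (∀ x : ℝ, ∃ Lmt : ℂ,
      Tendsto (fun y => deriv (fun t => u x t) y) (nhdsWithin y1 (Ioi y1)) (nhds Lmt) ∧
      Tendsto (fun y => deriv (fun t => u x t) y) (nhdsWithin y1 (Iio y1)) (nhds Lmt)) ∧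
    -- (iii) Helmholtz equation in each open layer
    (∀ x y : ℝ, y1 < y →
      iteratedDeriv 2 (fun t => u t y) x + iteratedDeriv 2 (fun t => u x t) y +
        ((k0 ^ 2 * εp : ℝ) : ℂ) * u x y = 0) ∧
    (∀ x y : ℝ, y0 < y → y < y1 →
      iteratedDeriv 2 (fun t => u t y) x + iteratedDeriv 2 (fun t => u x t) y +
        ((k0 ^ 2 * εt y : ℝ) : ℂ) * u x y = 0) ∧
    (∀ x y : ℝ, y < y0 →
      iteratedDeriv 2 (fun t => u t y) x + iteratedDeriv 2 (fun t => u x t) y +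
        ((k0 ^ 2 * εm : ℝ) : ℂ) * u x y = 0) :=
  three_layer_reference_field_general y0 y1 h01 k0 εp εm α hαp hαm βp βm hβp hβm εt f f' f'' hf'
    hf'' hode hbc0 hbc1 R2 T2 hR2 hT2 u hu
end

section
/- Let $L > 0$, $d > 0$, $\sigma > 0$ be real numbers, let $k^* \in \mathbb{C}$, and let $c^1, c^2 \in \mathbb{C}$. Define $\phi : \mathbb{R} \to \mathbb{C}$ by $\phi(y) = c^1 e^{i k^*(1 + i\sigma)(y - L/2)} + c^2 e^{-i k^*(1 + i\sigma)(y - L/2)}$. Then: (i) $\phi(L/2 + d) = 0$ if and only if $c^2 = -c^1 e^{2 i k^* d (1 + i\sigma)}$; and (ii) if $c^2 = -c^1 e^{2 i k^* d (1 + i\sigma)}$, then $\frac{1}{1 + i\sigma}\,\phi'(L/2)\,\overline{\phi(L/2)} = |c^1|^2\Big[\big(1 - e^{-4d(\mathrm{Im}(k^*) + \sigma\,\mathrm{Re}(k^*))}\big)\, i k^* \; - \; 2 k^*\, e^{-2d(\mathrm{Im}(k^*) + \sigma\,\mathrm{Re}(k^*))}\,\sin\!\big(2d(\mathrm{Re}(k^*)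 - \sigma\,\mathrm{Im}(k^*))\big)\Big].$ -/
open Complex ComplexConjugate

/-!
With `B = i k (1 + iσ)` the field is `c₁ e^{B(y - L/2)} + c₂ e^{-B(y - L/2)}`, so the Dirichlet
condition at `L/2 + d` reads `c₂ = -c₁ E` with `E = e^{2Bd}`. Since `φ(L/2) = c₁ + c₂` and
`φ'(L/2) = B (c₁ - c₂)`, the flux is `i k |c₁|² (1 + E) conj (1 - E) = i k |c₁|² (1 - |E|² + 2i Im E)`,
and `|E|`, `Im E` are read off from the real and imaginary parts of `2Bd`.
-/

noncomputable def expPair (c₁ c₂ B : ℂ) (a y : ℝ) : ℂ :=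
  c₁ * exp (B * ((y - a : ℝ) : ℂ)) + c₂ * exp (-B * ((y - a : ℝ) : ℂ))

section expPair

variable (c₁ c₂ B : ℂ) (a : ℝ)

theorem expPair_self : expPair c₁ c₂ B a a = c₁ + c₂ := by
  simp [expPair]

theorem hasDerivAt_expPair (y : ℝ) :
    HasDerivAt (expPair c₁ c₂ B a) (B * expPair c₁ (-c₂) B a y) y := by
  have hlin : ∀ C : ℂ, HasDerivAt (fun t : ℝ => C * ((t - a : ℝ) : ℂ)) C y := fun C =>
    ((((hasDerivAt_id y).sub_const a).ofReal_comp).const_mul C).congr_deriv (by simp)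
  refine (((hlin B).cexp.const_mul c₁).add ((hlin (-B)).cexp.const_mul c₂)).congr_deriv ?_
  rw [expPair]
  ring

theorem expPair_add_eq_zero_iff (d : ℝ) :
    expPair c₁ c₂ B a (a + d) = 0 ↔ c₂ = -c₁ * exp (2 * B * d) := by
  have hE : exp (2 * B * d) = exp (B * d) * exp (B * d) := by rw [← exp_add]; ring_nf
  have hne := exp_ne_zero (B * d)
  simp only [expPair, add_sub_cancel_left, neg_mul, exp_neg, hE]
  constructor
  · intro h
    field_simp at h
    linear_combination h
  · intro h
    rw [h]
    field_simp
    ring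

end expPair

theorem one_add_I_mul_ofReal_ne_zero (σ : ℝ) : 1 + I * σ ≠ 0 := fun h => by
  simpa using congrArg re h

theorem one_add_mul_conj_one_sub (E : ℂ) :
    (1 + E) * conj (1 - E) = ((1 - ‖E‖ ^ 2 : ℝ) : ℂ) + 2 * I * E.im := by
  have hE : E * conj E = ((‖E‖ ^ 2 : ℝ) : ℂ) := by rw [mul_conj, normSq_eq_norm_sq]
  have hsub : E - conj E = 2 * I * E.im := by rw [sub_conj]; push_cast; ring
  rw [map_sub, map_one]
  push_cast at hE ⊢
  linear_combination hsub - hE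

theorem one_add_exp_mul_conj_one_sub_exp (w : ℂ) :
    (1 + exp w) * conj (1 - exp w) =
      ((1 - Real.exp (2 * w.re) : ℝ) : ℂ) + 2 * I * (Real.exp w.re * Real.sin w.im : ℝ) := by
  rw [one_add_mul_conj_one_sub, norm_exp, ← Real.exp_nat_mul, exp_im]
  push_cast
  ring

theorem pml_flux_formula_general
    (L d σ : ℝ)
    (k : ℂ) (c1 c2 : ℂ) (φ : ℝ → ℂ)
    (hφ : φ = fun y =>
      c1 * Complex.exp (Complex.I * k * (1 + Complex.I * σ) * ((y - L / 2 : ℝ) : ℂ)) +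
      c2 * Complex.exp (-(Complex.I * k * (1 + Complex.I * σ)) * ((y - L / 2 : ℝ) : ℂ))) :
    (φ (L / 2 + d) = 0 ↔ c2 = -c1 * Complex.exp (2 * Complex.I * k * d * (1 + Complex.I * σ))) ∧
    (c2 = -c1 * Complex.exp (2 * Complex.I * k * d * (1 + Complex.I * σ)) →
      (1 / (1 + Complex.I * σ)) * deriv φ (L / 2) * conj (φ (L / 2)) =
        ((‖c1‖ : ℝ) : ℂ) ^ 2 *
          (((1 - Real.exp (-4 * d * (k.im + σ * k.re)) : ℝ) : ℂ) * (Complex.I * k) -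
            2 * k * ((Real.exp (-2 * d * (k.im + σ * k.re)) : ℝ) : ℂ) *
              ((Real.sin (2 * d * (k.re - σ * k.im)) : ℝ) : ℂ))) := by
  replace hφ : φ = expPair c1 c2 (I * k * (1 + I * σ)) (L / 2) := hφ
  set w := 2 * I * k * d * (1 + I * σ) with hw
  have hwB : 2 * (I * k * (1 + I * σ)) * d = w := by ring
  have hre : w.re = -2 * d * (k.im + σ * k.re) := by
    simp only [hw, mul_re, mul_im, add_re, add_im, ofReal_re, ofReal_im, I_re, I_im, one_re,
      one_im, re_ofNat, im_ofNat]
    ring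
  have him : w.im = 2 * d * (k.re - σ * k.im) := by
    simp only [hw, mul_re, mul_im, add_re, add_im, ofReal_re, ofReal_im, I_re, I_im, one_re,
      one_im, re_ofNat, im_ofNat]
    ring
  subst hφ
  refine ⟨by rw [expPair_add_eq_zero_iff, hwB], fun hc2 => ?_⟩
  rw [(hasDerivAt_expPair ..).deriv, expPair_self, expPair_self, hc2]
  have hflux : 1 / (1 + I * σ) * (I * k * (1 + I * σ) * (c1 + -(-c1 * exp w))) *
      conj (c1 + -c1 * exp w) = ‖c1‖ ^ 2 * (I * k * ((1 + exp w) * conj (1 - exp w))) := by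
    have := one_add_I_mul_ofReal_ne_zero σ
    rw [← mul_conj']
    simp only [map_add, map_mul, map_neg, map_sub, map_one]
    field_simp
    ring
  rw [hflux, one_add_exp_mul_conj_one_sub_exp, hre, him,
    show -4 * d * (k.im + σ * k.re) = 2 * (-2 * d * (k.im + σ * k.re)) by ring]
  push_cast
  ring_nf
  rw [I_sq]
  ring

/-- The explicit PML boundary-flux computation (A.2): the zero Dirichlet
condition at the outer PML boundary forces the reflection relation
`c² = -c¹ e^{2ik*d(1+iσ)}`, and then the flux `(1+iσ)⁻¹ φ'(L/2) conj(φ(L/2))`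
has the stated closed form. -/
theorem pml_flux_formula
    (L d σ : ℝ) (hL : 0 < L) (hd : 0 < d) (hσ : 0 < σ)
    (k : ℂ) (c1 c2 : ℂ) (φ : ℝ → ℂ)
    (hφ : φ = fun y =>
      c1 * Complex.exp (Complex.I * k * (1 + Complex.I * σ) * ((y - L / 2 : ℝ) : ℂ)) +
      c2 * Complex.exp (-(Complex.I * k * (1 + Complex.I * σ)) * ((y - L / 2 : ℝ) : ℂ))) :
    (φ (L / 2 + d) = 0 ↔ c2 = -c1 * Complex.exp (2 * Complex.I * k * d * (1 + Complex.I * σ))) ∧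
    (c2 = -c1 * Complex.exp (2 * Complex.I * k * d * (1 + Complex.I * σ)) →
      (1 / (1 + Complex.I * σ)) * deriv φ (L / 2) * conj (φ (L / 2)) =
        ((‖c1‖ : ℝ) : ℂ) ^ 2 *
          (((1 - Real.exp (-4 * d * (k.im + σ * k.re)) : ℝ) : ℂ) * (Complex.I * k) -
            2 * k * ((Real.exp (-2 * d * (k.im + σ * k.re)) : ℝ) : ℂ) *
              ((Real.sin (2 * d * (k.re - σ * k.im)) : ℝ) : ℂ))) :=
  pml_flux_formula_general L d σ k c1 c2 φ hφ
end

section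
/- Let $L > 0$, $d > 0$, $\sigma > 0$ be real, and let $k^* \in \mathbb{C}$ with $\mathrm{Re}(k^*) \geq 0$ and $\mathrm{Im}(k^*) \geq 0$. Let $c^1 \in \mathbb{C}$, set $c^2 = -c^1 e^{2ik^*d(1+i\sigma)}$, and define $\phi(y) = c^1 e^{ik^*(1+i\sigma)(y - L/2)} + c^2 e^{-ik^*(1+i\sigma)(y - L/2)}$. Then $\mathrm{Re}\Big(\frac{1}{1+i\sigma}\,\phi'(L/2)\,\overline{\phi(L/2)}\Big) \leq |c^1|^2\Big[-\big(1 - e^{-4d(\mathrm{Im}(k^*) + \sigma\,\mathrm{Re}(k^*))}\big)\,\mathrm{Im}(k^*) + 2\,\mathrm{Re}(k^*)\Big].$ -/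
/-!
At the interface the flux reduces to `i k (c¹ - c²) (c¹ + c²)‾`, and the Dirichlet relation
`c² = -c¹ E` with `E = e^{2ikd(1+iσ)}` turns it into `|c¹|² i k (1 + E)(1 - Ē)
= |c¹|² i k (1 - |E|² + 2i Im E)`. Its real part is `-(1 - |E|²) Im k - 2 Re k Im E`, and
`|E| = e^{-2d(Im k + σ Re k)} ≤ 1` bounds `-Im E` by `1`.
-/

open Complex ComplexConjugate

namespace PML

theorem hasDerivAt_two_wave (c₁ c₂ A : ℂ) (y₀ : ℝ) :
    HasDerivAt (fun y : ℝ => c₁ * exp (A * ((y - y₀ : ℝ) : ℂ)) + c₂ * exp (-A * ((y - y₀ : ℝ) : ℂ)))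
      (A * (c₁ - c₂)) y₀ := by
  have hlin (B : ℂ) : HasDerivAt (fun y : ℝ => B * ((y - y₀ : ℝ) : ℂ)) B y₀ := by
    simpa using (((hasDerivAt_id y₀).sub_const y₀).ofReal_comp).const_mul B
  refine (((hlin A).cexp.const_mul c₁).add ((hlin (-A)).cexp.const_mul c₂)).congr_deriv ?_
  simp only [sub_self, ofReal_zero, mul_zero, exp_zero]
  ring

theorem flux_eq_of_dirichlet (s k c₁ c₂ E : ℂ) (hs : s ≠ 0) (hc₂ : c₂ = -c₁ * E) :
    1 / s * (I * k * s * (c₁ - c₂)) * conj (c₁ + c₂) =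
      (‖c₁‖ ^ 2 : ℝ) * (I * k * (1 + E) * (1 - conj E)) := by
  subst hc₂
  rw [ofReal_pow, ← mul_conj', map_add, map_mul, map_neg]
  field_simp
  ring

theorem re_I_mul_one_add_mul_one_sub_conj (k E : ℂ) :
    (I * k * (1 + E) * (1 - conj E)).re = -((1 - ‖E‖ ^ 2) * k.im) - 2 * k.re * E.im := by
  rw [← normSq_eq_norm_sq, normSq_apply]
  simp only [mul_re, mul_im, add_re, add_im, sub_re, sub_im, one_re, one_im, I_re, I_im,
    conj_re, conj_im]
  ring

theorem re_I_mul_one_add_mul_one_sub_conj_le {k E : ℂ} (hk : 0 ≤ k.re) (hE : ‖E‖ ≤ 1) :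
    (I * k * (1 + E) * (1 - conj E)).re ≤ -((1 - ‖E‖ ^ 2) * k.im) + 2 * k.re := by
  have hEim : -1 ≤ E.im := by linarith [neg_abs_le E.im, abs_im_le_norm E]
  rw [re_I_mul_one_add_mul_one_sub_conj]
  nlinarith

theorem norm_exp_two_I_mul_stretched (k : ℂ) (d σ : ℝ) :
    ‖exp (2 * I * k * d * (1 + I * σ))‖ = Real.exp (-2 * d * (k.im + σ * k.re)) := by
  rw [norm_exp]
  congr 1
  simp only [mul_re, mul_im, add_re, add_im, one_re, one_im, I_re, I_im, ofReal_re, ofReal_im,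
    re_ofNat, im_ofNat]
  ring

end PML

open PML in
theorem pml_flux_real_part_estimate_general
    (L d σ : ℝ) (hd : 0 < d) (hσ : 0 < σ)
    (k : ℂ) (hkre : 0 ≤ k.re) (hkim : 0 ≤ k.im)
    (c1 c2 : ℂ) (hc2 : c2 = -c1 * Complex.exp (2 * Complex.I * k * d * (1 + Complex.I * σ)))
    (φ : ℝ → ℂ)
    (hφ : φ = fun y =>
      c1 * Complex.exp (Complex.I * k * (1 + Complex.I * σ) * ((y - L / 2 : ℝ) : ℂ)) +
      c2 * Complex.exp (-(Complex.I * k * (1 + Complex.I * σ)) * ((y - L / 2 : ℝ) : ℂ))) :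
    ((1 / (1 + Complex.I * σ)) * deriv φ (L / 2) * conj (φ (L / 2))).re ≤
      ‖c1‖ ^ 2 *
        (-((1 - Real.exp (-4 * d * (k.im + σ * k.re))) * k.im) + 2 * k.re) := by
  set E := exp (2 * I * k * d * (1 + I * σ))
  have hderiv : deriv φ (L / 2) = I * k * (1 + I * σ) * (c1 - c2) :=
    (hφ ▸ hasDerivAt_two_wave c1 c2 _ (L / 2)).deriv
  have hval : φ (L / 2) = c1 + c2 := by simp [hφ]
  have hs : (1 + I * σ : ℂ) ≠ 0 := fun h => by simpa using congrArg re h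
  have hnormE : ‖E‖ = Real.exp (-2 * d * (k.im + σ * k.re)) := norm_exp_two_I_mul_stretched k d σ
  have hE : ‖E‖ ≤ 1 := hnormE ▸ Real.exp_le_one_iff.mpr (by nlinarith [mul_nonneg hσ.le hkre])
  have hE2 : ‖E‖ ^ 2 = Real.exp (-4 * d * (k.im + σ * k.re)) := by
    rw [hnormE, ← Real.exp_nat_mul]; ring_nf
  rw [hderiv, hval, flux_eq_of_dirichlet _ _ _ _ _ hs hc2, re_ofReal_mul,
    ← hE2]
  exact mul_le_mul_of_nonneg_left (re_I_mul_one_add_mul_one_sub_conj_le hkre hE) (by positivity)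

/-- The real-part estimate for the PML boundary flux used in the proof of
Proposition A.1. -/
theorem pml_flux_real_part_estimate
    (L d σ : ℝ) (hL : 0 < L) (hd : 0 < d) (hσ : 0 < σ)
    (k : ℂ) (hkre : 0 ≤ k.re) (hkim : 0 ≤ k.im)
    (c1 c2 : ℂ) (hc2 : c2 = -c1 * Complex.exp (2 * Complex.I * k * d * (1 + Complex.I * σ)))
    (φ : ℝ → ℂ)
    (hφ : φ = fun y =>
      c1 * Complex.exp (Complex.I * k * (1 + Complex.I * σ) * ((y - L / 2 : ℝ) : ℂ)) +
      c2 * Complex.exp (-(Complex.I * k * (1 + Complex.I * σ)) * ((y - L / 2 : ℝ) : ℂ))) :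
    ((1 / (1 + Complex.I * σ)) * deriv φ (L / 2) * conj (φ (L / 2))).re ≤
      ‖c1‖ ^ 2 *
        (-((1 - Real.exp (-4 * d * (k.im + σ * k.re))) * k.im) + 2 * k.re) :=
  pml_flux_real_part_estimate_general L d σ hd hσ k hkre hkim c1 c2 hc2 φ hφ
end
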